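/- Fix a natural number m ≥ 1 and work in the real inner product space of functions (Fin m → Fin 2) → ℝ with the standard dot product (i.e., EuclideanSpace ℝ (Fin m → Fin 2)). Define h by h(s) = ∏_{i} (cos(π/8) if s i = 0, else sin(π/8)), and for x ∈ (ZMod 2)^m define Φ_x by Φ_x(s) = ∏_i φ_{x i}(s i), where φ_0(s) = (1 if s = 0, else 0) and φ_1(s) = 1/√2 for both s. Then for every ZMod 2–submodule L of (ZMod 2)^m of rank l, the vector w := ∑_{x ∈ L} Φ_x satisfies: (i) ⟪h, w⟫ = 2^l · cos(π/8)^m, and (ii) ‖w‖² = 2^l · ∑_{x ∈ L} (1/√2)^{wt(x)}. Consequently ⟪h, w⟫² / ‖w‖² = 2^l · cos(π/8)^{2m} / Z(L) with Z(L) = ∑_{x ∈ L} (1/√2)^{wt(x)}. -/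

import Mathlib

open scoped Classical RealInnerProductSpace

/-- Hamming weight of a vector over `ZMod 2`. -/
def wt {m : ℕ} (x : Fin m → ZMod 2) : ℕ :=
  (Finset.univ.filter fun i => x i ≠ 0).card

/-- The `m`-fold tensor power of the magic state `|H⟩ = cos(π/8)|0⟩ + sin(π/8)|1⟩`. -/
noncomputable def hvec (m : ℕ) : EuclideanSpace ℝ (Fin m → Fin 2) :=
  WithLp.toLp 2 (fun s : Fin m → Fin 2 => ∏ i, (if s i = 0 then Real.cos (Real.pi / 8) else Real.sin (Real.pi / 8)))

/-- The single-qubit stabilizer states `|0⟩` and `|+⟩`. -/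
noncomputable def phi : ZMod 2 → Fin 2 → ℝ :=
  fun b s => if b = 0 then (if s = 0 then 1 else 0) else 1 / Real.sqrt 2

/-- The stabilizer state `ψ_1^{x_1} ⊗ ⋯ ⊗ ψ_m^{x_m}`. -/
noncomputable def Phi (m : ℕ) (x : Fin m → ZMod 2) : EuclideanSpace ℝ (Fin m → Fin 2) :=
  WithLp.toLp 2 (fun s : Fin m → Fin 2 => ∏ i, phi (x i) (s i))

/-! The states `hvec m` and `Phi m x` are product vectors, so every inner product between them
factorises into single-qubit overlaps: `⟨H|0⟩ = ⟨H|+⟩ = cos(π/8)` and `⟨φ_a|φ_b⟩` is `1` or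
`1/√2` according as `a = b` or not. Hence `⟪h, Φ_x⟫ = cos(π/8)^m` for every `x`, and
`⟪Φ_x, Φ_y⟫ = (1/√2)^wt(x+y)`; summing over the code `L` and reindexing `y ↦ x + y`
gives both identities, each with the factor `|L| = 2^l`. -/

lemma Fintype.sum_sum_add_eq_card_nsmul {G M : Type*} [AddGroup G] [Fintype G]
    [AddCommMonoid M] (f : G → M) :
    ∑ x, ∑ y, f (x + y) = Fintype.card G • ∑ z, f z := by
  calc ∑ x, ∑ y, f (x + y) = ∑ _x : G, ∑ z, f z :=
        Finset.sum_congr rfl fun x _ => Fintype.sum_equiv (Equiv.addLeft x) _ _ fun _ => rfl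
    _ = Fintype.card G • ∑ z, f z := by rw [Finset.sum_const, Finset.card_univ]

lemma EuclideanSpace.inner_toLp_prod {ι κ : Type*} [Fintype ι] [DecidableEq ι] [Fintype κ]
    (f g : ι → κ → ℝ) :
    ⟪(WithLp.toLp 2 (fun s : ι → κ => ∏ i, f i (s i)) : EuclideanSpace ℝ (ι → κ)),
      WithLp.toLp 2 (fun s : ι → κ => ∏ i, g i (s i))⟫ = ∏ i, ∑ t, f i t * g i t := by
  simp only [PiLp.inner_apply, RCLike.inner_apply, conj_trivial,
    Fintype.prod_sum, ← Finset.prod_mul_distrib, mul_comm]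

lemma prod_ite_eq_pow_wt {m : ℕ} (z : Fin m → ZMod 2) (c : ℝ) :
    ∏ i, (if z i = 0 then 1 else c) = c ^ wt z := by
  rw [Finset.prod_ite, Finset.prod_const_one, one_mul, Finset.prod_const, wt]

lemma ZMod.two_eq_zero_or_one (a : ZMod 2) : a = 0 ∨ a = 1 := by
  revert a; decide

lemma Real.cos_pi_div_eight_add_sin_pi_div_eight : Real.cos (Real.pi / 8) + Real.sin (Real.pi / 8)
    = Real.sqrt 2 * Real.cos (Real.pi / 8) := by
  have h := Real.cos_sub (Real.pi / 8) (Real.pi / 4)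
  rw [Real.cos_pi_div_four, Real.sin_pi_div_four,
    show Real.pi / 8 - Real.pi / 4 = -(Real.pi / 8) by ring, Real.cos_neg] at h
  have h2 : Real.sqrt 2 * Real.sqrt 2 = 2 := Real.mul_self_sqrt (by norm_num)
  linear_combination (-Real.sqrt 2) * h + (-(Real.cos (Real.pi / 8) + Real.sin (Real.pi / 8)) / 2) * h2

lemma sum_magic_mul_phi (a : ZMod 2) :
    ∑ t : Fin 2, (if t = 0 then Real.cos (Real.pi / 8) else Real.sin (Real.pi / 8)) * phi a t
      = Real.cos (Real.pi / 8) := by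
  rcases a.two_eq_zero_or_one with rfl | rfl
  · simp [phi]
  · simp only [Fin.sum_univ_two, phi, one_ne_zero, if_false, if_true]
    rw [← add_mul, Real.cos_pi_div_eight_add_sin_pi_div_eight]
    field_simp

lemma sum_phi_mul_phi (a b : ZMod 2) :
    ∑ t : Fin 2, phi a t * phi b t = if a + b = 0 then 1 else 1 / Real.sqrt 2 := by
  have h2 : Real.sqrt 2 * Real.sqrt 2 = 2 := Real.mul_self_sqrt (by norm_num)
  rcases a.two_eq_zero_or_one with rfl | rfl <;> rcases b.two_eq_zero_or_one with rfl | rfl <;>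
    simp [phi, (by decide : (1 : ZMod 2) + 1 = 0)]
  field_simp
  linarith

lemma inner_hvec_Phi (m : ℕ) (x : Fin m → ZMod 2) :
    ⟪hvec m, Phi m x⟫ = Real.cos (Real.pi / 8) ^ m := by
  rw [hvec, Phi, EuclideanSpace.inner_toLp_prod
    (fun _ t => if t = 0 then Real.cos (Real.pi / 8) else Real.sin (Real.pi / 8))]
  simp only [sum_magic_mul_phi, Finset.prod_const, Finset.card_univ, Fintype.card_fin]

lemma inner_Phi_Phi (m : ℕ) (x y : Fin m → ZMod 2) :
    ⟪Phi m x, Phi m y⟫ = (1 / Real.sqrt 2) ^ wt (x + y) := by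
  rw [Phi, Phi, EuclideanSpace.inner_toLp_prod]
  simp only [sum_phi_mul_phi, ← prod_ite_eq_pow_wt, Pi.add_apply]

lemma card_eq_two_pow_finrank (V : Type*) [AddCommGroup V] [Module (ZMod 2) V] [Fintype V] :
    (Fintype.card V : ℝ) = 2 ^ Module.finrank (ZMod 2) V := by
  rw [Module.card_eq_pow_finrank (K := ZMod 2), ZMod.card, Nat.cast_pow, Nat.cast_ofNat]

theorem stmt_7_general (m : ℕ) (L : Submodule (ZMod 2) (Fin m → ZMod 2)) :
    ⟪hvec m, ∑ x : L, Phi m x⟫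
        = 2 ^ Module.finrank (ZMod 2) L * Real.cos (Real.pi / 8) ^ m
    ∧ ‖∑ x : L, Phi m x‖ ^ 2
        = 2 ^ Module.finrank (ZMod 2) L
          * ∑ x : L, (1 / Real.sqrt 2) ^ wt (x : Fin m → ZMod 2)
    ∧ ⟪hvec m, ∑ x : L, Phi m x⟫ ^ 2 / ‖∑ x : L, Phi m x‖ ^ 2
        = 2 ^ Module.finrank (ZMod 2) L * Real.cos (Real.pi / 8) ^ (2 * m)
          / ∑ x : L, (1 / Real.sqrt 2) ^ wt (x : Fin m → ZMod 2) := by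
  have overlap : ⟪hvec m, ∑ x : L, Phi m x⟫
      = 2 ^ Module.finrank (ZMod 2) L * Real.cos (Real.pi / 8) ^ m := by
    simp only [inner_sum, inner_hvec_Phi, Finset.sum_const, Finset.card_univ, nsmul_eq_mul,
      card_eq_two_pow_finrank]
  have norm_sq : ‖∑ x : L, Phi m x‖ ^ 2
      = 2 ^ Module.finrank (ZMod 2) L * ∑ x : L, (1 / Real.sqrt 2) ^ wt (x : Fin m → ZMod 2) := by
    rw [← real_inner_self_eq_norm_sq, sum_inner]
    simp only [inner_sum, inner_Phi_Phi, ← Submodule.coe_add]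
    rw [Fintype.sum_sum_add_eq_card_nsmul (fun z : L => (1 / Real.sqrt 2) ^ wt (z : Fin m → ZMod 2)),
      nsmul_eq_mul, card_eq_two_pow_finrank]
  refine ⟨overlap, norm_sq, ?_⟩
  rw [overlap, norm_sq, mul_pow, pow_mul', sq (2 ^ _ : ℝ), mul_assoc,
    mul_div_mul_left _ _ (by positivity)]

theorem stmt_7 (m : ℕ) (hm : 1 ≤ m) (L : Submodule (ZMod 2) (Fin m → ZMod 2)) :
    ⟪hvec m, ∑ x : L, Phi m x⟫
        = 2 ^ Module.finrank (ZMod 2) L * Real.cos (Real.pi / 8) ^ m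
    ∧ ‖∑ x : L, Phi m x‖ ^ 2
        = 2 ^ Module.finrank (ZMod 2) L
          * ∑ x : L, (1 / Real.sqrt 2) ^ wt (x : Fin m → ZMod 2)
    ∧ ⟪hvec m, ∑ x : L, Phi m x⟫ ^ 2 / ‖∑ x : L, Phi m x‖ ^ 2
        = 2 ^ Module.finrank (ZMod 2) L * Real.cos (Real.pi / 8) ^ (2 * m)
          / ∑ x : L, (1 / Real.sqrt 2) ^ wt (x : Fin m → ZMod 2) :=
  stmt_7_general m L
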